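/- Let m ≥ 2 be an integer with m ≡ 2 (mod 6), let f(x) = x^m on ℤ_3, and let t = ν_3(m + 1). For each integer l ≥ 0 and each a ∈ {0, 1, …, 3^(t−1) − 1}, let x₀ = 1 + 3^(l+1) + 3^(l+2)·a (a 3-adic unit, with inverse x₀⁻¹ in ℤ_3) and set M_{l,a} = (x₀ + 3^(t+l+1)ℤ_3) ∪ (x₀⁻¹ + 3^(t+l+1)ℤ_3). Then the sets M_{l,a} are pairwise disjoint clopen subsets of ℤ_3, each M_{l,a} is a minimal component of f (f(M_{l,a}) ⊆ M_{l,a} and every forward orbit of f in M_{l,a} is dense in M_{l,a}), the union of all the M_{l,a} together with {1} equals the ball 1 + 3ℤ_3, and moreover f maps the ball 2 + 3ℤ_3 into 1 + 3ℤ_3. -/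

import Mathlib

/-!
For `x ≡ 1 (mod 3)` lifting the exponent gives `v₃(x^n - 1) = v₃(x - 1) + v₃(n)`. If
`v₃(x - 1) = l + 1`, then `v₃(x^(m+1) - 1) ≥ t + l + 1`, so `x^m ≡ x⁻¹ (mod 3^(t+l+1))` and
`f` swaps the two balls of `M_{l,a}`. By the same formula, if `v₃(u - 1) = e ≥ 1` then the
`u^k`, `k < 3^(N-e)`, are pairwise distinct mod `3^N`, so by counting they exhaust
`1 + 3^e ℤ₃` mod `3^N`. Applied to `u = x^(3^t)` and to `u = m²` (where `v₃(m² - 1) = t`),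
this shows that the `x^(m^(2k))` reach every point of `x (1 + 3^(t+l+1) ℤ₃)` modulo any `3^N`,
which is the density of each orbit. The balls are told apart by `v₃(x - 1) = l + 1` and by the
residue of `(x - 1)/3^(l+1)` mod 3, which is `1` on the ball of `x₀` and `2` on that of `x₀⁻¹`.
-/

open scoped Ring

theorem emultiplicity_pow_sub_pow_of_odd_prime {R : Type*} [CommRing R] [IsDomain R] {p : ℕ}
    (hp : p.Prime) (hp1 : Odd p) (hpR : Prime (p : R)) {x y : R} (hxy : (p : R) ∣ x - y)
    (hx : ¬(p : R) ∣ x) (n : ℕ) :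
    emultiplicity (p : R) (x ^ n - y ^ n) = emultiplicity (p : R) (x - y) + emultiplicity p n := by
  rcases eq_or_ne n 0 with rfl | hn
  · simp
  obtain ⟨k, c, hc, rfl⟩ := Nat.exists_eq_pow_mul_and_not_dvd hn p hp.ne_one
  have hcR : ¬(p : R) ∣ (c : R) :=
    fun h => hpR.not_isUnit (((hp.coprime_iff_not_dvd.mpr hc).cast).isUnit_of_dvd h)
  rw [pow_mul, pow_mul, emultiplicity_pow_sub_pow_of_prime hpR
    (hxy.trans (sub_dvd_pow_sub_pow x y _)) (fun h => hx (hpR.dvd_of_dvd_pow h)) hcR,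
    emultiplicity_pow_prime_pow_sub_pow_prime_pow hpR hp1 hxy hx,
    emultiplicity_mul hp.prime, emultiplicity_pow_self hp.ne_zero hp.prime.not_isUnit,
    emultiplicity_eq_zero.2 hc, add_zero]

theorem emultiplicity_eq_of_pow_succ_dvd_sub {α : Type*} [CommRing α] {a b c : α} {e : ℕ}
    (hb : emultiplicity a b = e) (h : a ^ (e + 1) ∣ c - b) : emultiplicity a c = e := by
  rw [emultiplicity_eq_coe] at hb ⊢
  have hc : c = b + (c - b) := by ring
  refine ⟨hc ▸ dvd_add hb.1 ((pow_dvd_pow a e.le_succ).trans h), fun hc' => hb.2 ?_⟩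
  simpa using dvd_sub hc' h

theorem three_dvd_pow_sub_one_of_three_dvd_sub_two {R : Type*} [CommRing R] {x : R} {m : ℕ}
    (hm : Even m) (hx : (3 : R) ∣ x - 2) : (3 : R) ∣ x ^ m - 1 := by
  obtain ⟨k, rfl⟩ := hm
  have h3 : (3 : R) ∣ x ^ 2 - 1 := by
    have : x ^ 2 - 1 = (x - 2) * (x + 2) + 3 := by ring
    exact this ▸ dvd_add (dvd_mul_of_dvd_left hx _) dvd_rfl
  simpa [← two_mul, pow_mul] using h3.trans (sub_dvd_pow_sub_pow (x ^ 2) 1 k)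

section BallPair

variable {R : Type*} [CommRing R] {d c x y : R}

theorem dvd_inverse_sub_inverse_iff (hx : IsUnit x) (hy : IsUnit y) :
    d ∣ x⁻¹ʳ - y⁻¹ʳ ↔ d ∣ x - y := by
  obtain ⟨u, rfl⟩ := hx
  obtain ⟨v, rfl⟩ := hy
  have : ((u⁻¹ : Rˣ) : R) - (v⁻¹ : Rˣ) = ((u⁻¹ * v⁻¹ : Rˣ) : R) * (v - u) := by
    rw [Units.val_mul, mul_sub, mul_assoc, Units.inv_mul, mul_one, mul_comm, ← mul_assoc,
      Units.mul_inv, one_mul]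
  rw [Ring.inverse_unit, Ring.inverse_unit, this, Units.dvd_mul_left, dvd_sub_comm]

-- The paper's `(c + dR) ∪ (c⁻¹ + dR)`; `Ring.inverse` is `0` off the units, so the lemmas
-- assume `IsUnit c`.
def ballPair (d c : R) : Set R := {x | d ∣ x - c} ∪ {x | d ∣ x - c⁻¹ʳ}

theorem self_mem_ballPair : c ∈ ballPair d c := Or.inl (by simp)

theorem ballPair_eq_of_dvd_sub (hx : IsUnit x) (hc : IsUnit c) (h : d ∣ x - c) :
    ballPair d x = ballPair d c := by
  have hinv := (dvd_inverse_sub_inverse_iff hx hc).2 h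
  have key : ∀ {a b : R}, d ∣ a - b → ∀ z, d ∣ z - a ↔ d ∣ z - b := fun hab z =>
    ⟨fun h' => sub_add_sub_cancel z _ _ ▸ dvd_add h' hab,
      fun h' => sub_sub_sub_cancel_right z _ _ ▸ dvd_sub h' hab⟩
  ext z
  simp only [ballPair, Set.mem_union, Set.mem_ofPred_eq, key h z, key hinv z]

theorem ballPair_inverse (hc : IsUnit c) : ballPair d c⁻¹ʳ = ballPair d c := by
  rw [ballPair, ballPair, Ring.inverse_inverse hc, Set.union_comm]

theorem ballPair_eq_of_mem (hx : IsUnit x) (hc : IsUnit c) (h : x ∈ ballPair d c) :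
    ballPair d x = ballPair d c := by
  rcases h with h | h
  · exact ballPair_eq_of_dvd_sub hx hc h
  · rw [ballPair_eq_of_dvd_sub hx hc.ringInverse h, ballPair_inverse hc]

theorem inverse_mem_ballPair_iff (hx : IsUnit x) (hc : IsUnit c) :
    x⁻¹ʳ ∈ ballPair d c ↔ x ∈ ballPair d c := by
  simp only [ballPair, Set.mem_union, Set.mem_ofPred_eq]
  rw [dvd_inverse_sub_inverse_iff hx hc, or_comm, ← dvd_inverse_sub_inverse_iff hx hc.ringInverse,
    Ring.inverse_inverse hc]

theorem emultiplicity_sub_one_of_mem_ballPair {a : R} {e n : ℕ} (hc : IsUnit c)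
    (hce : emultiplicity a (c - 1) = e) (hn : e < n) (hx : x ∈ ballPair (a ^ n) c) :
    emultiplicity a (x - 1) = e := by
  have hdvd : a ^ (e + 1) ∣ a ^ n := pow_dvd_pow a hn
  rcases hx with hx | hx
  · exact emultiplicity_eq_of_pow_succ_dvd_sub hce (by simpa using hdvd.trans hx)
  · refine emultiplicity_eq_of_pow_succ_dvd_sub (b := c⁻¹ʳ - 1) ?_
      (by simpa using hdvd.trans hx)
    rw [← hce, emultiplicity_eq_emultiplicity_iff]
    intro k
    simpa using dvd_inverse_sub_inverse_iff hc isUnit_one (d := a ^ k)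

end BallPair

namespace PadicInt

variable {p : ℕ} [hp : Fact p.Prime]

theorem isUnit_of_dvd_sub_one {x : ℤ_[p]} (h : (p : ℤ_[p]) ∣ x - 1) : IsUnit x := by
  have h' : (p : ℤ_[p]) ∣ 1 - x := dvd_sub_comm.1 h
  simpa using IsLocalRing.isUnit_one_sub_self_of_mem_nonunits (1 - x)
    fun hu => prime_p.not_isUnit (isUnit_of_dvd_unit h' hu)

theorem isUnit_of_emultiplicity_sub_one_eq {x : ℤ_[p]} {e : ℕ} (he : 1 ≤ e)
    (h : emultiplicity (p : ℤ_[p]) (x - 1) = e) : IsUnit x :=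
  isUnit_of_dvd_sub_one (dvd_of_emultiplicity_pos (h ▸ Nat.cast_pos.2 he))

theorem toZModPow_eq_iff_pow_dvd_sub {N : ℕ} {a b : ℤ_[p]} :
    toZModPow N a = toZModPow N b ↔ (p : ℤ_[p]) ^ N ∣ a - b := by
  rw [← sub_eq_zero, ← map_sub, ← RingHom.mem_ker, ker_toZModPow, Ideal.mem_span_singleton]

theorem pow_dvd_natCast_sub_natCast_iff {N A B : ℕ} :
    (p : ℤ_[p]) ^ N ∣ (A : ℤ_[p]) - B ↔ A ≡ B [MOD p ^ N] := by
  have := pow_p_dvd_int_iff (p := p) N ((A : ℤ) - B)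
  push_cast at this
  rw [this, Nat.modEq_iff_dvd, dvd_sub_comm]
  norm_cast

theorem pow_dvd_natCast_iff {k n : ℕ} : (p : ℤ_[p]) ^ k ∣ (n : ℤ_[p]) ↔ p ^ k ∣ n := by
  simpa [Nat.modEq_zero_iff_dvd] using
    pow_dvd_natCast_sub_natCast_iff (p := p) (N := k) (A := n) (B := 0)

theorem emultiplicity_natCast (n : ℕ) :
    emultiplicity (p : ℤ_[p]) (n : ℤ_[p]) = emultiplicity p n :=
  emultiplicity_eq_emultiplicity_iff.2 fun _ => pow_dvd_natCast_iff

theorem isClopen_setOf_pow_dvd_sub (c : ℤ_[p]) (n : ℕ) :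
    IsClopen {x : ℤ_[p] | (p : ℤ_[p]) ^ n ∣ x - c} := by
  convert IsUltrametricDist.isClopen_closedBall c (r := (p : ℝ) ^ (-n : ℤ))
    (zpow_ne_zero _ (Nat.cast_ne_zero.2 hp.out.ne_zero)) using 1
  ext x
  rw [Set.mem_ofPred_eq, Metric.mem_closedBall, dist_eq_norm, norm_le_pow_iff_mem_span_pow,
    Ideal.mem_span_singleton]

theorem isClopen_ballPair (c : ℤ_[p]) (n : ℕ) : IsClopen (ballPair ((p : ℤ_[p]) ^ n) c) :=
  (isClopen_setOf_pow_dvd_sub c n).union (isClopen_setOf_pow_dvd_sub _ n)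

theorem mem_closure_of_forall_pow_dvd_sub {S : Set ℤ_[p]} {z : ℤ_[p]}
    (h : ∀ N : ℕ, ∃ y ∈ S, (p : ℤ_[p]) ^ N ∣ y - z) : z ∈ closure S := by
  refine Metric.mem_closure_iff.2 fun ε hε => ?_
  obtain ⟨N, hN⟩ := exists_pow_neg_lt p hε
  obtain ⟨y, hyS, hy⟩ := h N
  refine ⟨y, hyS, lt_of_le_of_lt ?_ hN⟩
  rw [dist_comm, dist_eq_norm, norm_le_pow_iff_mem_span_pow, Ideal.mem_span_singleton]
  exact hy

theorem emultiplicity_pow_sub_one (hp1 : Odd p) {x : ℤ_[p]} (hx : (p : ℤ_[p]) ∣ x - 1)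
    (n : ℕ) :
    emultiplicity (p : ℤ_[p]) (x ^ n - 1) =
      emultiplicity (p : ℤ_[p]) (x - 1) + emultiplicity p n := by
  have hx' : ¬(p : ℤ_[p]) ∣ x := fun h =>
    prime_p.not_isUnit (isUnit_of_dvd_one (by simpa using dvd_sub h hx))
  simpa using emultiplicity_pow_sub_pow_of_odd_prime hp.out hp1 prime_p hx hx' n

theorem pow_dvd_pow_sub_one_of_pow_dvd (hp1 : Odd p) {x : ℤ_[p]} (hx : (p : ℤ_[p]) ∣ x - 1)
    {e t n : ℕ} (hxe : (p : ℤ_[p]) ^ e ∣ x - 1) (hn : p ^ t ∣ n) :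
    (p : ℤ_[p]) ^ (e + t) ∣ x ^ n - 1 := by
  rw [pow_dvd_iff_le_emultiplicity, emultiplicity_pow_sub_one hp1 hx, Nat.cast_add]
  exact add_le_add (pow_dvd_iff_le_emultiplicity.1 hxe) (pow_dvd_iff_le_emultiplicity.1 hn)

theorem pow_dvd_pow_sub_pow_of_modEq (hp1 : Odd p) {x : ℤ_[p]} (hx : (p : ℤ_[p]) ∣ x - 1)
    {A B N : ℕ} (h : A ≡ B [MOD p ^ N]) : (p : ℤ_[p]) ^ N ∣ x ^ A - x ^ B := by
  wlog hBA : B ≤ A generalizing A B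
  · simpa [dvd_sub_comm] using this h.symm (by omega)
  obtain ⟨d, rfl⟩ := Nat.exists_eq_add_of_le hBA
  have hd : p ^ N ∣ d := by simpa using (Nat.modEq_iff_dvd' hBA).1 h.symm
  have : x ^ (B + d) - x ^ B = x ^ B * (x ^ d - 1) := by ring
  rw [this, ((isUnit_of_dvd_sub_one hx).pow B).dvd_mul_left, pow_dvd_iff_le_emultiplicity,
    emultiplicity_pow_sub_one hp1 hx]
  exact le_add_left (pow_dvd_iff_le_emultiplicity.1 hd)

theorem exists_lt_pow_dvd_sub (w : ℤ_[p]) (n : ℕ) :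
    ∃ s < p ^ n, (p : ℤ_[p]) ^ n ∣ w - s :=
  ⟨w.appr n, w.appr_lt n, Ideal.mem_span_singleton.1 (appr_spec n w)⟩

theorem exists_lt_pow_dvd_sub_one_add {e N : ℕ} (heN : e ≤ N) {y : ℤ_[p]}
    (hy : (p : ℤ_[p]) ^ e ∣ y - 1) :
    ∃ s < p ^ (N - e), (p : ℤ_[p]) ^ N ∣ y - (1 + (p : ℤ_[p]) ^ e * s) := by
  obtain ⟨w, hw⟩ := hy
  obtain ⟨s, hs, hws⟩ := exists_lt_pow_dvd_sub w (N - e)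
  refine ⟨s, hs, ?_⟩
  rw [show y - (1 + (p : ℤ_[p]) ^ e * s) = (p : ℤ_[p]) ^ e * (w - s) by linear_combination hw,
    ← Nat.add_sub_cancel' heN, pow_add]
  exact mul_dvd_mul_left _ hws

theorem not_pow_dvd_pow_sub_pow (hp1 : Odd p) {u : ℤ_[p]} {e N : ℕ} (he : 1 ≤ e)
    (hu : emultiplicity (p : ℤ_[p]) (u - 1) = e) {k₁ k₂ : ℕ} (hk : k₁ < k₂)
    (hk₂ : k₂ < p ^ (N - e)) :
    ¬(p : ℤ_[p]) ^ N ∣ u ^ k₂ - u ^ k₁ := by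
  intro h
  have hu1 : (p : ℤ_[p]) ∣ u - 1 := dvd_of_emultiplicity_pos (hu ▸ Nat.cast_pos.2 he)
  obtain ⟨d, rfl⟩ := Nat.exists_eq_add_of_lt hk
  have hd : d + 1 ≠ 0 := by omega
  have : u ^ (k₁ + d + 1) - u ^ k₁ = u ^ k₁ * (u ^ (d + 1) - 1) := by ring
  rw [this, ((isUnit_of_dvd_sub_one hu1).pow k₁).dvd_mul_left, pow_dvd_iff_le_emultiplicity,
    emultiplicity_pow_sub_one hp1 hu1, hu, ← padicValNat_eq_emultiplicity hd] at h
  have hv : N - e ≤ padicValNat p (d + 1) := by norm_cast at h; omega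
  have := Nat.le_of_dvd (by omega) ((pow_dvd_pow p hv).trans pow_padicValNat_dvd)
  omega

theorem exists_pow_dvd_sub (hp1 : Odd p) {u : ℤ_[p]} {e : ℕ} (he : 1 ≤ e)
    (hu : emultiplicity (p : ℤ_[p]) (u - 1) = e) {y : ℤ_[p]} (hy : (p : ℤ_[p]) ^ e ∣ y - 1)
    (N : ℕ) : ∃ k, (p : ℤ_[p]) ^ N ∣ u ^ k - y := by
  wlog heN : e ≤ N generalizing N
  · obtain ⟨k, hk⟩ := this e le_rfl
    exact ⟨k, (pow_dvd_pow _ (by omega)).trans hk⟩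
  classical
  -- The `p ^ (N - e)` powers `u ^ k`, `k < p ^ (N - e)`, are distinct mod `p ^ N` and lie among the
  -- `p ^ (N - e)` residues of `1 + p ^ e * s`, so they exhaust them.
  set S := Finset.range (p ^ (N - e))
  set F : ℕ → ZMod (p ^ N) := fun k => toZModPow N (u ^ k)
  set G : ℕ → ZMod (p ^ N) := fun s => toZModPow N (1 + (p : ℤ_[p]) ^ e * s)
  have hG : ∀ z : ℤ_[p], (p : ℤ_[p]) ^ e ∣ z - 1 → toZModPow N z ∈ S.image G := fun z hz => by
    obtain ⟨s, hs, hzs⟩ := exists_lt_pow_dvd_sub_one_add heN hz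
    exact Finset.mem_image.2
      ⟨s, Finset.mem_range.2 hs, (toZModPow_eq_iff_pow_dvd_sub.2 hzs).symm⟩
  have hFG : S.image F ⊆ S.image G := by
    simp only [Finset.image_subset_iff]
    intro k _
    exact hG _ ((pow_dvd_iff_le_emultiplicity.2 hu.ge).trans
      (by simpa using sub_dvd_pow_sub_pow u 1 k))
  have hF : Set.InjOn F S := by
    intro k₁ hk₁ k₂ hk₂ h
    simp only [S, Finset.coe_range, Set.mem_Iio] at hk₁ hk₂
    by_contra hne
    rcases Nat.lt_or_gt_of_ne hne with hlt | hlt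
    · exact not_pow_dvd_pow_sub_pow hp1 he hu hlt hk₂ (toZModPow_eq_iff_pow_dvd_sub.1 h.symm)
    · exact not_pow_dvd_pow_sub_pow hp1 he hu hlt hk₁ (toZModPow_eq_iff_pow_dvd_sub.1 h)
  have hcard : (S.image G).card ≤ (S.image F).card := by
    rw [Finset.card_image_of_injOn hF]
    exact Finset.card_image_le
  obtain ⟨k, -, hk⟩ :=
    Finset.mem_image.1 ((Finset.eq_of_subset_of_card_le hFG hcard) ▸ hG y hy)
  exact ⟨k, toZModPow_eq_iff_pow_dvd_sub.1 hk⟩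

theorem exists_pow_pow_dvd_sub (hp1 : Odd p) {q t : ℕ} (ht : 1 ≤ t)
    (hq : emultiplicity (p : ℤ_[p]) ((q : ℤ_[p]) - 1) = t) {x : ℤ_[p]} {e : ℕ}
    (he : 1 ≤ e) (hx : emultiplicity (p : ℤ_[p]) (x - 1) = e) {z : ℤ_[p]}
    (hz : (p : ℤ_[p]) ^ (t + e) ∣ z - x) (N : ℕ) : ∃ k, (p : ℤ_[p]) ^ N ∣ x ^ q ^ k - z := by
  have hx1 : (p : ℤ_[p]) ∣ x - 1 := dvd_of_emultiplicity_pos (hx ▸ Nat.cast_pos.2 he)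
  have hxu := isUnit_of_dvd_sub_one hx1
  have hu : emultiplicity (p : ℤ_[p]) (x ^ p ^ t - 1) = (t + e : ℕ) := by
    rw [emultiplicity_pow_sub_one hp1 hx1, hx,
      emultiplicity_pow_self hp.out.ne_zero hp.out.prime.not_isUnit]
    push_cast
    ring
  have hy : (p : ℤ_[p]) ^ (t + e) ∣ x⁻¹ʳ * z - 1 := by
    have : x⁻¹ʳ * z - 1 = x⁻¹ʳ * (z - x) := by
      linear_combination Ring.inverse_mul_cancel x hxu
    exact this ▸ dvd_mul_of_dvd_right hz _
  obtain ⟨j, hj⟩ := exists_pow_dvd_sub hp1 (by omega) hu hy N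
  obtain ⟨k, hk⟩ := exists_pow_dvd_sub hp1 ht hq (y := ((1 + p ^ t * j : ℕ) : ℤ_[p]))
    (by simp) N
  have hk' : q ^ k ≡ 1 + p ^ t * j [MOD p ^ N] :=
    pow_dvd_natCast_sub_natCast_iff.1 (by simpa using hk)
  -- `z = x * y` with `y ≈ (x ^ p ^ t) ^ j` and `q ^ k ≡ 1 + p ^ t * j`, so `x ^ q ^ k ≈ z`.
  refine ⟨k, ?_⟩
  have : x ^ q ^ k - z =
      (x ^ q ^ k - x ^ (1 + p ^ t * j)) + x * ((x ^ p ^ t) ^ j - x⁻¹ʳ * z) := by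
    rw [pow_add, pow_mul]
    linear_combination z * Ring.mul_inverse_cancel x hxu
  rw [this]
  exact dvd_add (pow_dvd_pow_sub_pow_of_modEq hp1 hx1 hk') (dvd_mul_of_dvd_right hj _)

theorem not_dvd_two (hp1 : Odd p) : ¬(p : ℤ_[p]) ∣ 2 := fun h => by
  have h2 : p ∣ 2 := by
    simpa using (pow_dvd_natCast_iff (p := p) (k := 1) (n := 2)).1 (by simpa using h)
  rcases Nat.prime_two.eq_one_or_self_of_dvd p h2 with h1 | rfl
  · exact hp.out.ne_one h1
  · exact absurd hp1 (by decide)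

theorem emultiplicity_natCast_sq_sub_one (hp1 : Odd p) {m : ℕ} (hm : p ∣ m + 1) :
    emultiplicity (p : ℤ_[p]) ((m : ℤ_[p]) ^ 2 - 1) = padicValNat p (m + 1) := by
  have hm1 : ¬(p : ℤ_[p]) ∣ (m : ℤ_[p]) - 1 := fun h => not_dvd_two hp1 <|
    (show ((m + 1 : ℕ) : ℤ_[p]) - ((m : ℤ_[p]) - 1) = 2 by push_cast; ring) ▸
      dvd_sub (Nat.cast_dvd_cast hm) h
  rw [show (m : ℤ_[p]) ^ 2 - 1 = ((m : ℤ_[p]) - 1) * ((m + 1 : ℕ) : ℤ_[p]) by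
      push_cast; ring,
    emultiplicity_mul prime_p, emultiplicity_eq_zero.2 hm1, zero_add,
    emultiplicity_natCast, padicValNat_eq_emultiplicity (by omega)]

theorem pow_sub_inverse_dvd (hp1 : Odd p) {x : ℤ_[p]} {l t m : ℕ}
    (hx : (p : ℤ_[p]) ^ (l + 1) ∣ x - 1) (hm : p ^ t ∣ m + 1) :
    (p : ℤ_[p]) ^ (t + l + 1) ∣ x ^ m - x⁻¹ʳ := by
  have hx1 : (p : ℤ_[p]) ∣ x - 1 := (dvd_pow_self _ l.succ_ne_zero).trans hx
  have : x ^ m - x⁻¹ʳ = x⁻¹ʳ * (x ^ (m + 1) - 1) := by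
    linear_combination (-x ^ m) * Ring.inverse_mul_cancel x (isUnit_of_dvd_sub_one hx1)
  rw [this, show t + l + 1 = l + 1 + t by ring]
  exact dvd_mul_of_dvd_right (pow_dvd_pow_sub_one_of_pow_dvd hp1 hx1 hx hm) _

theorem pow_mem_ballPair (hp1 : Odd p) {c x : ℤ_[p]} {l t m : ℕ} (hc : IsUnit c)
    (hx1 : (p : ℤ_[p]) ^ (l + 1) ∣ x - 1) (hm : p ^ t ∣ m + 1)
    (hx : x ∈ ballPair ((p : ℤ_[p]) ^ (t + l + 1)) c) :
    x ^ m ∈ ballPair ((p : ℤ_[p]) ^ (t + l + 1)) c := by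
  have hxu := isUnit_of_dvd_sub_one ((dvd_pow_self _ l.succ_ne_zero).trans hx1)
  rw [← ballPair_eq_of_mem hxu hc hx]
  exact Or.inr (pow_sub_inverse_dvd hp1 hx1 hm)

theorem ballPair_subset_closure_range_pow_pow (hp1 : Odd p) {c x : ℤ_[p]} {l t m : ℕ}
    (ht : 1 ≤ t) (hm : p ^ t ∣ m + 1)
    (hm2 : emultiplicity (p : ℤ_[p]) ((m : ℤ_[p]) ^ 2 - 1) = t)
    (hc : IsUnit c) (hx1 : emultiplicity (p : ℤ_[p]) (x - 1) = (l + 1 : ℕ))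
    (hx : x ∈ ballPair ((p : ℤ_[p]) ^ (t + l + 1)) c) :
    ballPair ((p : ℤ_[p]) ^ (t + l + 1)) c ⊆ closure (Set.range fun n : ℕ => x ^ m ^ n) := by
  have hxu := isUnit_of_emultiplicity_sub_one_eq l.succ_pos hx1
  have hxm := pow_sub_inverse_dvd hp1 (pow_dvd_iff_le_emultiplicity.2 hx1.ge) hm
  have hxm1 : emultiplicity (p : ℤ_[p]) (x ^ m - 1) = (l + 1 : ℕ) :=
    emultiplicity_sub_one_of_mem_ballPair hxu hx1 (by omega) (Or.inr hxm)
  have hq : emultiplicity (p : ℤ_[p]) (((m ^ 2 : ℕ) : ℤ_[p]) - 1) = t := by simpa using hm2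
  intro z hz
  rw [← ballPair_eq_of_mem hxu hc hx] at hz
  refine mem_closure_of_forall_pow_dvd_sub fun N => ?_
  rcases hz with hz | hz
  · obtain ⟨k, hk⟩ := exists_pow_pow_dvd_sub hp1 ht hq l.succ_pos hx1 hz N
    exact ⟨_, ⟨2 * k, by simp only [pow_mul]⟩, hk⟩
  · obtain ⟨k, hk⟩ := exists_pow_pow_dvd_sub hp1 ht hq l.succ_pos hxm1
      (sub_sub_sub_cancel_right z _ _ ▸ dvd_sub hz hxm) N
    exact ⟨_, ⟨2 * k + 1, by
      rw [← pow_mul, ← pow_mul, ← pow_succ']⟩, hk⟩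

end PadicInt

namespace MonomialZ3

theorem prime_three : Prime (3 : ℤ_[3]) := PadicInt.prime_p

noncomputable def basePoint (l a : ℕ) : ℤ_[3] := 1 + 3 ^ (l + 1) + 3 ^ (l + 2) * a

theorem basePoint_sub_one (l a : ℕ) : basePoint l a - 1 = 3 ^ (l + 1) * (1 + 3 * a) := by
  unfold basePoint
  ring

theorem emultiplicity_basePoint_sub_one (l a : ℕ) :
    emultiplicity (3 : ℤ_[3]) (basePoint l a - 1) = (l + 1 : ℕ) := by
  rw [emultiplicity_eq_coe, basePoint_sub_one, pow_succ 3 (l + 1),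
    mul_dvd_mul_iff_left (pow_ne_zero _ prime_three.ne_zero)]
  exact ⟨dvd_mul_right _ _,
    (dvd_add_left (dvd_mul_right _ _)).not.2 prime_three.not_dvd_one⟩

theorem isUnit_basePoint (l a : ℕ) : IsUnit (basePoint l a) :=
  PadicInt.isUnit_of_emultiplicity_sub_one_eq l.succ_pos (emultiplicity_basePoint_sub_one l a)

variable {t l : ℕ}

theorem emultiplicity_sub_one_of_mem_ballPair_basePoint (ht : 1 ≤ t) {a : ℕ} {x : ℤ_[3]}
    (hx : x ∈ ballPair ((3 : ℤ_[3]) ^ (t + l + 1)) (basePoint l a)) :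
    emultiplicity (3 : ℤ_[3]) (x - 1) = (l + 1 : ℕ) :=
  emultiplicity_sub_one_of_mem_ballPair (isUnit_basePoint l a) (emultiplicity_basePoint_sub_one l a)
    (by omega) hx

theorem basePoint_not_mem_ballPair (ht : 1 ≤ t) {a a' : ℕ} (ha : a < 3 ^ (t - 1))
    (ha' : a' < 3 ^ (t - 1)) (hne : a ≠ a') :
    basePoint l a' ∉ ballPair ((3 : ℤ_[3]) ^ (t + l + 1)) (basePoint l a) := by
  have hpow : (3 : ℤ_[3]) ^ (t + l + 1) = 3 ^ (l + 2) * 3 ^ (t - 1) := by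
    rw [← pow_add]
    congr 1
    omega
  rintro (h | h)
  · have : basePoint l a' - basePoint l a = 3 ^ (l + 2) * ((a' : ℤ_[3]) - a) := by
      unfold basePoint
      ring
    rw [Set.mem_ofPred_eq, this, hpow,
      mul_dvd_mul_iff_left (pow_ne_zero _ prime_three.ne_zero)] at h
    exact hne (Nat.ModEq.eq_of_lt_of_lt (PadicInt.pow_dvd_natCast_sub_natCast_iff.1 h) ha' ha).symm
  · have h' : (3 : ℤ_[3]) ^ (l + 1) * 3 ∣ basePoint l a * basePoint l a' - 1 := by
      have : basePoint l a * basePoint l a' - 1 =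
          basePoint l a * (basePoint l a' - (basePoint l a)⁻¹ʳ) := by
        linear_combination Ring.mul_inverse_cancel _ (isUnit_basePoint l a)
      rw [this, ← pow_succ]
      exact dvd_mul_of_dvd_right ((pow_dvd_pow 3 (by omega)).trans h) _
    have : basePoint l a * basePoint l a' - 1 = 3 ^ (l + 1) *
        (2 + 3 * (a + a' + 3 ^ l * ((1 + 3 * a) * (1 + 3 * a')))) := by
      unfold basePoint
      ring
    rw [this, mul_dvd_mul_iff_left (pow_ne_zero _ prime_three.ne_zero)] at h'
    exact (dvd_add_left (dvd_mul_right _ _)).not.2 (PadicInt.not_dvd_two (p := 3) (by decide)) h'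

theorem disjoint_ballPair_basePoint (ht : 1 ≤ t) {l' a a' : ℕ} (ha : a < 3 ^ (t - 1))
    (ha' : a' < 3 ^ (t - 1)) (hne : (l, a) ≠ (l', a')) :
    Disjoint (ballPair ((3 : ℤ_[3]) ^ (t + l + 1)) (basePoint l a))
      (ballPair ((3 : ℤ_[3]) ^ (t + l' + 1)) (basePoint l' a')) := by
  refine Set.disjoint_left.2 fun x hx hx' => ?_
  have hl := (emultiplicity_sub_one_of_mem_ballPair_basePoint ht hx).symm.trans
    (emultiplicity_sub_one_of_mem_ballPair_basePoint ht hx')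
  obtain rfl : l = l' := Nat.succ_injective (Nat.cast_injective hl)
  have hxu := PadicInt.isUnit_of_emultiplicity_sub_one_eq l.succ_pos
    (emultiplicity_sub_one_of_mem_ballPair_basePoint ht hx)
  refine basePoint_not_mem_ballPair (l := l) ht ha ha' (fun h => hne (h ▸ rfl)) ?_
  rw [← ballPair_eq_of_mem hxu (isUnit_basePoint l a) hx,
    ballPair_eq_of_mem hxu (isUnit_basePoint l a') hx']
  exact self_mem_ballPair

theorem three_dvd_sub_one_or_add_one {w : ℤ_[3]} (hw : ¬(3 : ℤ_[3]) ∣ w) :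
    (3 : ℤ_[3]) ∣ w - 1 ∨ (3 : ℤ_[3]) ∣ w + 1 := by
  obtain ⟨s, hs, hws⟩ := PadicInt.exists_lt_pow_dvd_sub (p := 3) w 1
  rw [pow_one] at hws
  interval_cases s
  · exact absurd (by simpa using hws) hw
  · exact Or.inl (by simpa using hws)
  · exact Or.inr ((show w - ((2 : ℕ) : ℤ_[3]) + 3 = w + 1 by push_cast; ring) ▸
      dvd_add hws (dvd_refl 3))

theorem exists_pow_dvd_sub_basePoint (ht : 1 ≤ t) {y : ℤ_[3]}
    (hy : (3 : ℤ_[3]) ^ (l + 2) ∣ y - (1 + 3 ^ (l + 1))) :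
    ∃ a < 3 ^ (t - 1), (3 : ℤ_[3]) ^ (t + l + 1) ∣ y - basePoint l a := by
  obtain ⟨b, hb⟩ := hy
  obtain ⟨a, ha, hba⟩ := PadicInt.exists_lt_pow_dvd_sub (p := 3) b (t - 1)
  refine ⟨a, ha, ?_⟩
  rw [show y - basePoint l a = 3 ^ (l + 2) * (b - a) by unfold basePoint; linear_combination hb,
    show t + l + 1 = l + 2 + (t - 1) by omega, pow_add]
  exact mul_dvd_mul_left _ hba

theorem exists_mem_ballPair_basePoint (ht : 1 ≤ t) {x : ℤ_[3]} (hx : (3 : ℤ_[3]) ∣ x - 1)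
    (hx1 : x ≠ 1) :
    ∃ l, ∃ a < 3 ^ (t - 1), x ∈ ballPair ((3 : ℤ_[3]) ^ (t + l + 1)) (basePoint l a) := by
  obtain ⟨l, w, hw, hxw⟩ : ∃ l w, ¬(3 : ℤ_[3]) ∣ w ∧ x - 1 = 3 ^ (l + 1) * w := by
    have hfin := FiniteMultiplicity.of_prime_left prime_three (sub_ne_zero.2 hx1)
    obtain ⟨w, hxw, hw⟩ := hfin.exists_eq_pow_mul_and_not_dvd
    obtain ⟨l, hl⟩ := Nat.exists_eq_add_of_le'
      (hfin.le_multiplicity_of_pow_dvd (k := 1) (by rwa [pow_one]))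
    exact ⟨l, w, hw, hl ▸ hxw⟩
  have hxu : IsUnit x := PadicInt.isUnit_of_dvd_sub_one hx
  rcases three_dvd_sub_one_or_add_one hw with hw1 | hw1
  · obtain ⟨a, ha, h⟩ := exists_pow_dvd_sub_basePoint ht (y := x) (l := l) (by
      rw [show x - (1 + 3 ^ (l + 1)) = 3 ^ (l + 1) * (w - 1) by linear_combination hxw, pow_succ]
      exact mul_dvd_mul_left _ hw1)
    exact ⟨l, a, ha, Or.inl h⟩
  · obtain ⟨a, ha, h⟩ := exists_pow_dvd_sub_basePoint ht (y := x⁻¹ʳ) (l := l) (by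
      rw [show x⁻¹ʳ - (1 + 3 ^ (l + 1)) = 3 ^ (l + 1) * (-x⁻¹ʳ * ((w + 1) + (x - 1))) by
          linear_combination (-x⁻¹ʳ) * hxw + (1 + 3 ^ (l + 1)) * Ring.inverse_mul_cancel x hxu,
        pow_succ]
      exact mul_dvd_mul_left _ (dvd_mul_of_dvd_right (dvd_add hw1 hx) _))
    exact ⟨l, a, ha, (inverse_mem_ballPair_iff hxu (isUnit_basePoint l a)).1 (Or.inl h)⟩

theorem iUnion_ballPair_basePoint_union_one (ht : 1 ≤ t) :
    (⋃ l : ℕ, ⋃ a ∈ Finset.range (3 ^ (t - 1)),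
        ballPair ((3 : ℤ_[3]) ^ (t + l + 1)) (basePoint l a)) ∪ {1} =
      {x : ℤ_[3] | (3 : ℤ_[3]) ∣ x - 1} := by
  ext x
  simp only [Set.mem_union, Set.mem_iUnion, Finset.mem_range, Set.mem_singleton_iff, exists_prop,
    Set.mem_ofPred_eq]
  constructor
  · rintro (⟨l, a, -, hx⟩ | rfl)
    · exact dvd_of_emultiplicity_pos
        ((emultiplicity_sub_one_of_mem_ballPair_basePoint ht hx) ▸ Nat.cast_pos.2 l.succ_pos)
    · simp
  · intro hx
    by_cases hx1 : x = 1
    · exact Or.inr hx1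
    · exact Or.inl (exists_mem_ballPair_basePoint ht hx hx1)

end MonomialZ3

open MonomialZ3

theorem monomial_Z3_two_mod_six_decomposition_general (m : ℕ) (hmod : m % 6 = 2)
    (t : ℕ) (ht : t = padicValNat 3 (m + 1))
    (x₀ : ℕ → ℕ → ℤ_[3])
    (hx₀ : ∀ l a, x₀ l a = 1 + 3 ^ (l + 1) + 3 ^ (l + 2) * (a : ℤ_[3]))
    (M : ℕ → ℕ → Set ℤ_[3])
    (hM : ∀ l a, M l a =
      {x : ℤ_[3] | (3 : ℤ_[3]) ^ (t + l + 1) ∣ x - x₀ l a} ∪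
      {x : ℤ_[3] | (3 : ℤ_[3]) ^ (t + l + 1) ∣ x - Ring.inverse (x₀ l a)}) :
    (∀ l a, a < 3 ^ (t - 1) → IsUnit (x₀ l a)) ∧
    (∀ l a l' a', a < 3 ^ (t - 1) → a' < 3 ^ (t - 1) →
      (l, a) ≠ (l', a') → Disjoint (M l a) (M l' a')) ∧
    (∀ l a, a < 3 ^ (t - 1) →
      IsClopen (M l a) ∧
      (∀ x ∈ M l a, x ^ m ∈ M l a) ∧
      (∀ x ∈ M l a, M l a ⊆ closure (Set.range fun n : ℕ => x ^ m ^ n))) ∧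
    ((⋃ l : ℕ, ⋃ a ∈ Finset.range (3 ^ (t - 1)), M l a)
        ∪ {1} = {x : ℤ_[3] | (3 : ℤ_[3]) ∣ x - 1}) ∧
    (∀ x : ℤ_[3], (3 : ℤ_[3]) ∣ x - 2 → (3 : ℤ_[3]) ∣ x ^ m - 1) := by
  obtain rfl : x₀ = basePoint := funext₂ hx₀
  obtain rfl : M = fun l a => ballPair ((3 : ℤ_[3]) ^ (t + l + 1)) (basePoint l a) := funext₂ hM
  have h3 : 3 ∣ m + 1 := by omega
  have ht1 : 1 ≤ t := ht ▸ one_le_padicValNat_of_dvd (by omega) h3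
  have hm : 3 ^ t ∣ m + 1 := ht ▸ pow_padicValNat_dvd
  have hm2 : emultiplicity (3 : ℤ_[3]) ((m : ℤ_[3]) ^ 2 - 1) = t :=
    ht ▸ PadicInt.emultiplicity_natCast_sq_sub_one (by decide) h3
  refine ⟨fun l a _ => isUnit_basePoint l a,
    fun l a l' a' ha ha' hne => disjoint_ballPair_basePoint ht1 ha ha' hne,
    fun l a _ => ⟨PadicInt.isClopen_ballPair _ _, fun x hx => ?_, fun x hx => ?_⟩,
    iUnion_ballPair_basePoint_union_one ht1,
    fun x hx => three_dvd_pow_sub_one_of_three_dvd_sub_two ⟨m / 2, by omega⟩ hx⟩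
  · exact PadicInt.pow_mem_ballPair (by decide) (isUnit_basePoint l a)
      (pow_dvd_iff_le_emultiplicity.2 (emultiplicity_sub_one_of_mem_ballPair_basePoint ht1 hx).ge)
      hm hx
  · exact PadicInt.ballPair_subset_closure_range_pow_pow (by decide) ht1 hm hm2
      (isUnit_basePoint l a) (emultiplicity_sub_one_of_mem_ballPair_basePoint ht1 hx) hx

/-- Minimal decomposition for `x ↦ x^m` on `ℤ_3` with `m ≡ 2 (mod 6)`:
with `x₀ = 1 + 3^(l+1) + 3^(l+2)a` (a 3-adic unit), the sets
`M_{l,a} = (x₀ + 3^(t+l+1)ℤ_3) ∪ (x₀⁻¹ + 3^(t+l+1)ℤ_3)` are pairwise disjoint clopen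
minimal components, together with `{1}` they cover exactly the ball `1 + 3ℤ_3`, and
`f` maps `2 + 3ℤ_3` into `1 + 3ℤ_3`. -/
theorem monomial_Z3_two_mod_six_decomposition (m : ℕ) (hm : 2 ≤ m) (hmod : m % 6 = 2)
    (t : ℕ) (ht : t = padicValNat 3 (m + 1))
    (x₀ : ℕ → ℕ → ℤ_[3])
    (hx₀ : ∀ l a, x₀ l a = 1 + 3 ^ (l + 1) + 3 ^ (l + 2) * (a : ℤ_[3]))
    (M : ℕ → ℕ → Set ℤ_[3])
    (hM : ∀ l a, M l a =
      {x : ℤ_[3] | (3 : ℤ_[3]) ^ (t + l + 1) ∣ x - x₀ l a} ∪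
      {x : ℤ_[3] | (3 : ℤ_[3]) ^ (t + l + 1) ∣ x - Ring.inverse (x₀ l a)}) :
    (∀ l a, a < 3 ^ (t - 1) → IsUnit (x₀ l a)) ∧
    (∀ l a l' a', a < 3 ^ (t - 1) → a' < 3 ^ (t - 1) →
      (l, a) ≠ (l', a') → Disjoint (M l a) (M l' a')) ∧
    (∀ l a, a < 3 ^ (t - 1) →
      IsClopen (M l a) ∧
      (∀ x ∈ M l a, x ^ m ∈ M l a) ∧
      (∀ x ∈ M l a, M l a ⊆ closure (Set.range fun n : ℕ => x ^ m ^ n))) ∧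
    ((⋃ l : ℕ, ⋃ a ∈ Finset.range (3 ^ (t - 1)), M l a)
        ∪ {1} = {x : ℤ_[3] | (3 : ℤ_[3]) ∣ x - 1}) ∧
    (∀ x : ℤ_[3], (3 : ℤ_[3]) ∣ x - 2 → (3 : ℤ_[3]) ∣ x ^ m - 1) :=
  monomial_Z3_two_mod_six_decomposition_general m hmod t ht x₀ hx₀ M hM
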